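/- arXiv:2009.09548 — 3 statements merged into one kernel-verified Lean document; each statement's English description precedes it below -/
import Mathlib

section
/- Let q ≥ 1, n ≥ 3, k ∈ ℕ, j ∈ {0,1,...,k}, and define B_{q,k}(j) = 4^j · Γ(j + (q+1)/2) / ((1)_{k-j} · (2j)!). Then binom(k,j) · Γ((q+1)/2)/k! ≤ B_{q,k}(j) ≤ 4^k · binom(k,j) · Γ(k + (q+1)/2)/(2k)!, with equality on the left iff j = 0 and on the right iff j = k. -/
private lemma cross_aux (a : ℝ) (ha : 1 ≤ a) (m : ℕ) :
    (4:ℝ)^m * Real.Gamma (m + a) * m.factorial * (2*(m+1)).factorial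
      < 4^(m+1) * Real.Gamma ((m+1 : ℕ) + a) * (m+1).factorial * (2*m).factorial := by
  have hpos : (0:ℝ) < Real.Gamma (m + a) :=
    Real.Gamma_pos_of_pos (by positivity)
  have hne : (m:ℝ) + a ≠ 0 := by positivity
  have hΓ : Real.Gamma ((m+1 : ℕ) + a) = ((m:ℝ) + a) * Real.Gamma (m + a) := by
    have h := Real.Gamma_add_one hne
    push_cast
    rw [show (m:ℝ) + 1 + a = ((m:ℝ) + a) + 1 by ring, h]
  rw [hΓ]
  have hf1 : ((2*(m+1)).factorial : ℝ)
      = (2*(m:ℝ)+2) * ((2*(m:ℝ)+1) * ((2*m).factorial : ℝ)) := by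
    have h : 2*(m+1) = (2*m+1) + 1 := by ring
    rw [h, Nat.factorial_succ, Nat.factorial_succ]
    push_cast; ring
  rw [hf1]
  have hfm : (0:ℝ) < m.factorial := by positivity
  have hdm : (0:ℝ) < ((2*m).factorial : ℝ) := by positivity
  have h4 : (0:ℝ) < (4:ℝ)^m := by positivity
  have hfact : ((m+1).factorial : ℝ) = ((m:ℝ)+1) * m.factorial := by
    rw [Nat.factorial_succ]; push_cast; ring
  rw [hfact, pow_succ]
  have hP : (0:ℝ) < (4:ℝ)^m * Real.Gamma (m + a) * m.factorial * (2*m).factorial := by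
    positivity
  nlinarith [mul_pos hP (show (0:ℝ) < (2*(m:ℝ)+2)*(2*a-1) by nlinarith)]

private lemma cross_lt (a : ℝ) (ha : 1 ≤ a) {j k : ℕ} (h : j < k) :
    (4:ℝ)^j * Real.Gamma (j + a) * j.factorial * (2*k).factorial
      < 4^k * Real.Gamma (k + a) * k.factorial * (2*j).factorial := by
  induction k, h using Nat.le_induction with
  | base => exact cross_aux a ha j
  | succ k hk ih =>
    have h1 := cross_aux a ha k
    have hDk : (0:ℝ) < ((2*k).factorial : ℝ) := by positivity
    have hDk1 : (0:ℝ) < ((2*(k+1)).factorial : ℝ) := by positivity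
    have hDj : (0:ℝ) < ((2*j).factorial : ℝ) := by positivity
    nlinarith [mul_lt_mul_of_pos_right ih hDk1, mul_lt_mul_of_pos_right h1 hDj,
      mul_pos hDk hDj]

theorem B_bounds (n : ℕ) (hn : 3 ≤ n) (q : ℝ) (hq : 1 ≤ q) (k j : ℕ) (hj : j ≤ k) :
    (k.choose j : ℝ) * Real.Gamma ((q + 1) / 2) / (k.factorial : ℝ)
        ≤ 4 ^ j * Real.Gamma (j + (q + 1) / 2)
            / (((k - j).factorial : ℝ) * ((2 * j).factorial : ℝ)) ∧
    4 ^ j * Real.Gamma (j + (q + 1) / 2)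
        / (((k - j).factorial : ℝ) * ((2 * j).factorial : ℝ))
      ≤ 4 ^ k * (k.choose j : ℝ) * Real.Gamma (k + (q + 1) / 2) / ((2 * k).factorial : ℝ) ∧
    ((k.choose j : ℝ) * Real.Gamma ((q + 1) / 2) / (k.factorial : ℝ)
        = 4 ^ j * Real.Gamma (j + (q + 1) / 2)
            / (((k - j).factorial : ℝ) * ((2 * j).factorial : ℝ)) ↔ j = 0) ∧
    (4 ^ j * Real.Gamma (j + (q + 1) / 2)
        / (((k - j).factorial : ℝ) * ((2 * j).factorial : ℝ))
      = 4 ^ k * (k.choose j : ℝ) * Real.Gamma (k + (q + 1) / 2) / ((2 * k).factorial : ℝ)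
        ↔ j = k) := by
  set a : ℝ := (q + 1) / 2 with hadef
  have ha : 1 ≤ a := by rw [hadef]; linarith
  have ha0 : 0 < a := lt_of_lt_of_le one_pos ha
  have hΓj : 0 < Real.Gamma (j + a) := Real.Gamma_pos_of_pos (by positivity)
  have hΓk : 0 < Real.Gamma (k + a) := Real.Gamma_pos_of_pos (by positivity)
  have hΓa : 0 < Real.Gamma a := Real.Gamma_pos_of_pos ha0
  have hkf : (0:ℝ) < k.factorial := by positivity
  have hjf : (0:ℝ) < j.factorial := by positivity
  have hkjf : (0:ℝ) < ((k - j).factorial : ℝ) := by positivity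
  have h2jf : (0:ℝ) < ((2*j).factorial : ℝ) := by positivity
  have h2kf : (0:ℝ) < ((2*k).factorial : ℝ) := by positivity
  have hden : (0:ℝ) < ((k - j).factorial : ℝ) * ((2*j).factorial : ℝ) :=
    mul_pos hkjf h2jf
  have hchoose : (0:ℝ) < (k.choose j : ℝ) := by
    exact_mod_cast Nat.choose_pos hj
  have hfac : (k.choose j : ℝ) * (j.factorial : ℝ) * ((k - j).factorial : ℝ)
      = (k.factorial : ℝ) := by
    exact_mod_cast Nat.choose_mul_factorial_mul_factorial hj
  -- strict left inequality when 0 < j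
  have hL : 0 < j →
      (k.choose j : ℝ) * Real.Gamma a / (k.factorial : ℝ)
        < 4 ^ j * Real.Gamma (j + a)
            / (((k - j).factorial : ℝ) * ((2 * j).factorial : ℝ)) := by
    intro hj0
    rw [div_lt_div_iff₀ hkf hden]
    have h := cross_lt a ha hj0
    norm_num at h
    calc (k.choose j : ℝ) * Real.Gamma a * (((k - j).factorial : ℝ) * ((2*j).factorial : ℝ))
        = (Real.Gamma a * ((2*j).factorial : ℝ))
            * ((k.choose j : ℝ) * ((k - j).factorial : ℝ)) := by ring
      _ < ((4:ℝ)^j * Real.Gamma (j + a) * (j.factorial : ℝ))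
            * ((k.choose j : ℝ) * ((k - j).factorial : ℝ)) :=
          mul_lt_mul_of_pos_right h (mul_pos hchoose hkjf)
      _ = 4 ^ j * Real.Gamma (j + a)
            * ((k.choose j : ℝ) * (j.factorial : ℝ) * ((k - j).factorial : ℝ)) := by ring
      _ = 4 ^ j * Real.Gamma (j + a) * (k.factorial : ℝ) := by rw [hfac]
  -- strict right inequality when j < k
  have hR : j < k →
      4 ^ j * Real.Gamma (j + a)
          / (((k - j).factorial : ℝ) * ((2 * j).factorial : ℝ))
        < 4 ^ k * (k.choose j : ℝ) * Real.Gamma (k + a) / ((2 * k).factorial : ℝ) := by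
    intro hjk
    rw [div_lt_div_iff₀ hden h2kf]
    have h := cross_lt a ha hjk
    rw [← mul_lt_mul_iff_left₀ hjf]
    calc 4 ^ j * Real.Gamma (j + a) * ((2*k).factorial : ℝ) * (j.factorial : ℝ)
        = (4:ℝ)^j * Real.Gamma (j + a) * (j.factorial : ℝ) * ((2*k).factorial : ℝ) := by
          ring
      _ < 4 ^ k * Real.Gamma (k + a) * (k.factorial : ℝ) * ((2*j).factorial : ℝ) := h
      _ = 4 ^ k * (k.choose j : ℝ) * Real.Gamma (k + a)
            * (((k - j).factorial : ℝ) * ((2*j).factorial : ℝ)) * (j.factorial : ℝ) := by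
          rw [← hfac]; ring
  -- equality at j = 0
  have hEq0 : (k.choose 0 : ℝ) * Real.Gamma a / (k.factorial : ℝ)
      = 4 ^ 0 * Real.Gamma ((0:ℕ) + a)
          / (((k - 0).factorial : ℝ) * ((2 * 0).factorial : ℝ)) := by
    simp
  -- equality at j = k
  have hEqk : 4 ^ k * Real.Gamma (k + a)
        / (((k - k).factorial : ℝ) * ((2 * k).factorial : ℝ))
      = 4 ^ k * (k.choose k : ℝ) * Real.Gamma (k + a) / ((2 * k).factorial : ℝ) := by
    simp
  refine ⟨?_, ?_, ?_, ?_⟩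
  · rcases Nat.eq_zero_or_pos j with h0 | h0
    · subst h0; exact le_of_eq hEq0
    · exact (hL h0).le
  · rcases eq_or_lt_of_le hj with h0 | h0
    · subst h0; exact le_of_eq hEqk
    · exact (hR h0).le
  · constructor
    · intro h
      by_contra hne
      exact absurd h (ne_of_lt (hL (Nat.pos_of_ne_zero hne)))
    · intro h; subst h; exact hEq0
  · constructor
    · intro h
      by_contra hne
      exact absurd h (ne_of_lt (hR (lt_of_le_of_ne hj hne)))
    · intro h; subst h; exact hEqk
end

section
/- Let q ∈ [(2K-1)/(n-1) + 1, 2K/(n-1) + 1] ∩ [1,∞) for some K ∈ ℕ, and let n ≥ 2 be an integer. Then for every integer k ≥ 0, the product of Pochhammer symbols ((n-1)(1-q)/2)_k · ((1-(n-1)(q-1))/2)_k is nonnegative. -/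
open Polynomial

lemma poch_pair_nonneg (x y : ℝ) (h : ∀ i : ℕ, 0 ≤ (x + i) * (y + i)) :
    ∀ k : ℕ, 0 ≤ (ascPochhammer ℝ k).eval x * (ascPochhammer ℝ k).eval y := by
  intro k
  induction k with
  | zero => simp
  | succ k ih =>
    rw [ascPochhammer_succ_eval, ascPochhammer_succ_eval]
    have := h k
    nlinarith [this, ih]

theorem pochhammer_product_nonneg (n : ℕ) (hn : 2 ≤ n) (K : ℕ) (q : ℝ) (hq1 : 1 ≤ q)
    (hql : (2 * (K : ℝ) - 1) / ((n : ℝ) - 1) + 1 ≤ q)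
    (hqr : q ≤ 2 * (K : ℝ) / ((n : ℝ) - 1) + 1) (k : ℕ) :
    0 ≤ (ascPochhammer ℝ k).eval (((n : ℝ) - 1) * (1 - q) / 2)
        * (ascPochhammer ℝ k).eval ((1 - ((n : ℝ) - 1) * (q - 1)) / 2) := by
  have hn1 : (0 : ℝ) < (n : ℝ) - 1 := by
    have : (2 : ℝ) ≤ (n : ℝ) := by exact_mod_cast hn
    linarith
  set t : ℝ := ((n : ℝ) - 1) * (q - 1) with ht
  have htl : 2 * (K : ℝ) - 1 ≤ t := by
    have := (div_le_iff₀ hn1).mp (by linarith : (2 * (K : ℝ) - 1) / ((n : ℝ) - 1) ≤ q - 1)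
    linarith [this]
  have htr : t ≤ 2 * (K : ℝ) := by
    have := (le_div_iff₀ hn1).mp (by linarith : q - 1 ≤ 2 * (K : ℝ) / ((n : ℝ) - 1))
    linarith [this]
  have key : ∀ i : ℕ,
      0 ≤ (((n : ℝ) - 1) * (1 - q) / 2 + i) * ((1 - ((n : ℝ) - 1) * (q - 1)) / 2 + i) := by
    intro i
    have hx : ((n : ℝ) - 1) * (1 - q) / 2 = -t / 2 := by rw [ht]; ring
    rw [hx]
    rcases lt_or_ge i K with hi | hi
    · have hiK : (i : ℝ) ≤ (K : ℝ) - 1 := by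
        have : (i : ℝ) + 1 ≤ (K : ℝ) := by exact_mod_cast hi
        linarith
      rw [← neg_mul_neg]
      apply mul_nonneg <;> · rw [neg_nonneg]; (try rw [← ht]); nlinarith
    · have hiK : (K : ℝ) ≤ (i : ℝ) := by exact_mod_cast hi
      apply mul_nonneg <;> · (try rw [← ht]); nlinarith
  exact poch_pair_nonneg _ _ key k
end

section
/- For ρ ∈ [0,1), β ∈ ℝ, and n ≥ 2, the function F(β) = |cos β - 2ρ/(1+ρ²)| / (1 + ρ² - 2ρ cos β)^n attains its maximum over β at cos β = 1, with maximum value 1/((1+ρ²)(1-ρ)^{2n-2}). -/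
theorem max_of_F (n : ℕ) (hn : 2 ≤ n) (ρ : ℝ) (hρ0 : 0 ≤ ρ) (hρ1 : ρ < 1) :
    (∀ β : ℝ,
        |Real.cos β - 2 * ρ / (1 + ρ ^ 2)| / (1 + ρ ^ 2 - 2 * ρ * Real.cos β) ^ n
          ≤ 1 / ((1 + ρ ^ 2) * (1 - ρ) ^ (2 * n - 2))) ∧
    (∀ β : ℝ, Real.cos β = 1 →
        |Real.cos β - 2 * ρ / (1 + ρ ^ 2)| / (1 + ρ ^ 2 - 2 * ρ * Real.cos β) ^ n
          = 1 / ((1 + ρ ^ 2) * (1 - ρ) ^ (2 * n - 2))) := by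
  obtain ⟨m, rfl⟩ : ∃ m, n = m + 2 := ⟨n - 2, by omega⟩
  have hs : (0:ℝ) < 1 + ρ ^ 2 := by positivity
  have hone : (0:ℝ) < 1 - ρ := by linarith
  constructor
  · intro β
    set c := Real.cos β with hc
    have hc1 : c ≤ 1 := Real.cos_le_one β
    have hcm : -1 ≤ c := Real.neg_one_le_cos β
    have hD : (1 - ρ) ^ 2 ≤ 1 + ρ ^ 2 - 2 * ρ * c := by nlinarith
    have hDpos : 0 < 1 + ρ ^ 2 - 2 * ρ * c := by nlinarith [sq_nonneg (1 - ρ)]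
    have h1 : |c - 2 * ρ / (1 + ρ ^ 2)| * (1 + ρ ^ 2) = |c * (1 + ρ ^ 2) - 2 * ρ| := by
      have e : (c - 2 * ρ / (1 + ρ ^ 2)) * (1 + ρ ^ 2) = c * (1 + ρ ^ 2) - 2 * ρ := by
        field_simp
      rw [← e, abs_mul, abs_of_pos hs]
    have h2 : |c * (1 + ρ ^ 2) - 2 * ρ| ≤ 1 + ρ ^ 2 - 2 * ρ * c := by
      rw [abs_le]
      constructor <;> nlinarith
    have h3 : |c - 2 * ρ / (1 + ρ ^ 2)| * (1 + ρ ^ 2) ≤ 1 + ρ ^ 2 - 2 * ρ * c := by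
      rw [h1]; exact h2
    rw [div_le_div_iff₀ (by positivity) (by positivity)]
    calc |c - 2 * ρ / (1 + ρ ^ 2)| * ((1 + ρ ^ 2) * (1 - ρ) ^ (2 * (m + 2) - 2))
        = (|c - 2 * ρ / (1 + ρ ^ 2)| * (1 + ρ ^ 2)) * ((1 - ρ) ^ 2) ^ (m + 1) := by
          rw [show 2 * (m + 2) - 2 = 2 * (m + 1) from by omega, pow_mul]; ring
      _ ≤ (1 + ρ ^ 2 - 2 * ρ * c) * (1 + ρ ^ 2 - 2 * ρ * c) ^ (m + 1) := by
          apply mul_le_mul h3 (pow_le_pow_left₀ (by positivity) hD (m + 1)) (by positivity) hDpos.le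
      _ = 1 * (1 + ρ ^ 2 - 2 * ρ * c) ^ (m + 2) := by ring
  · intro β h
    rw [h]
    have e1 : 1 - 2 * ρ / (1 + ρ ^ 2) = (1 - ρ) ^ 2 / (1 + ρ ^ 2) := by field_simp; ring
    rw [e1, abs_of_nonneg (by positivity)]
    have e2 : 1 + ρ ^ 2 - 2 * ρ * 1 = (1 - ρ) ^ 2 := by ring
    rw [e2, ← pow_mul, show 2 * (m + 2) = (2 * (m + 2) - 2) + 2 from by omega, pow_add]
    field_simp
    ring
    congr 1; omega
end
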